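/- The polynomial f(t,a,b) = t⁴ − t³ + ((32 + (1+a)(1+b))/100)·t² − ((16 + 3(1+a)(1+b))/500)·t + ((1+a)(1+b)(4 − (1−a)(1−b)))/5000 is strictly positive for all t > (16 + √13)/45 and all a, b ∈ [−1, 1]. -/
import Mathlib

/-- Auxiliary nonnegativity: the deviation polynomial `D(x,u,v)` is nonnegative
for `0 ≤ x ≤ 9/10` and `u, v ∈ [-x, 2-x]`. -/
lemma Dnn (x u v : ℝ) (hx0 : 0 ≤ x) (hx1 : x ≤ 9/10)
    (hu1 : -x ≤ u) (hu2 : u ≤ 2 - x) (hv1 : -x ≤ v) (hv2 : v ≤ 2 - x) :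
    0 ≤ x*(2-x)*(u-v)^2 + 2*x*(3-2*x)*(u*v) + 2*(1-x)*(u*v)*(u+v) - u^2*v^2 := by
  have hxv : (0:ℝ) ≤ x + v := by linarith
  have hxu : (0:ℝ) ≤ x + u := by linarith
  have h2x : (0:ℝ) ≤ 2 - x := by linarith
  have h1x : (0:ℝ) ≤ 1 - x := by linarith
  rcases le_or_gt 0 u with hu | hu
  · rcases le_or_gt 0 v with hv | hv
    · have hinner : 0 ≤ u*(2-x-v) + 2*(1-x)*v := by
        nlinarith [mul_nonneg hu (by linarith : (0:ℝ) ≤ 2-x-v), mul_nonneg h1x hv]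
      nlinarith [mul_nonneg (mul_nonneg hxv hu) hinner,
        mul_nonneg (mul_nonneg hx0 h2x) (sq_nonneg v)]
    · rcases le_or_gt 0 (u+v) with huv | huv
      · have hinner : 0 ≤ u*(2-x-v) + 2*(1-x)*v := by
          nlinarith [mul_nonneg hu (by linarith : (0:ℝ) ≤ x - v),
            mul_nonneg h1x (by linarith : (0:ℝ) ≤ u + v)]
        nlinarith [mul_nonneg (mul_nonneg hxv hu) hinner,
          mul_nonneg (mul_nonneg hx0 h2x) (sq_nonneg v)]
      · have hB : (x+v)*u ≤ x*(-v) := by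
          nlinarith [mul_nonneg hxv (by linarith : (0:ℝ) ≤ -v-u), sq_nonneg v]
        have hC : 2*(1-x)*(-v)*((x+v)*u) ≤ 2*(1-x)*(-v)*(x*(-v)) := by
          apply mul_le_mul_of_nonneg_left hB
          have := mul_nonneg h1x (by linarith : (0:ℝ) ≤ -v)
          linarith
        nlinarith [mul_nonneg (mul_nonneg (mul_nonneg hxv hu) hu) (by linarith : (0:ℝ) ≤ 2-x-v),
          hC, sq_nonneg (x*v), mul_nonneg (mul_nonneg hx0 hx0) (sq_nonneg v)]
  · rcases le_or_gt 0 v with hv | hv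
    · rcases le_or_gt 0 (u+v) with huv | huv
      · have hinner : 0 ≤ v*(2-x-u) + 2*(1-x)*u := by
          nlinarith [mul_nonneg hv (by linarith : (0:ℝ) ≤ x - u),
            mul_nonneg h1x (by linarith : (0:ℝ) ≤ u + v)]
        nlinarith [mul_nonneg (mul_nonneg hxu hv) hinner,
          mul_nonneg (mul_nonneg hx0 h2x) (sq_nonneg u)]
      · have hB : (x+u)*v ≤ x*(-u) := by
          nlinarith [mul_nonneg hxu (by linarith : (0:ℝ) ≤ -u-v), sq_nonneg u]
        have hC : 2*(1-x)*(-u)*((x+u)*v) ≤ 2*(1-x)*(-u)*(x*(-u)) := by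
          apply mul_le_mul_of_nonneg_left hB
          have := mul_nonneg h1x (by linarith : (0:ℝ) ≤ -u)
          linarith
        nlinarith [mul_nonneg (mul_nonneg (mul_nonneg hxu hv) hv) (by linarith : (0:ℝ) ≤ 2-x-u),
          hC, sq_nonneg (x*u), mul_nonneg (mul_nonneg hx0 hx0) (sq_nonneg u)]
    · have hinner : u*(2-x-v) + 2*(1-x)*v ≤ 0 := by
        nlinarith [mul_nonneg (by linarith : (0:ℝ) ≤ -u) (by linarith : (0:ℝ) ≤ 2-x-v),
          mul_nonneg h1x (by linarith : (0:ℝ) ≤ -v)]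
      have : 0 ≤ u * (u*(2-x-v) + 2*(1-x)*v) := by
        nlinarith [mul_nonneg (by linarith : (0:ℝ) ≤ -u)
          (by linarith : (0:ℝ) ≤ -(u*(2-x-v) + 2*(1-x)*v))]
      nlinarith [mul_nonneg hxv this, mul_nonneg (mul_nonneg hx0 h2x) (sq_nonneg v)]

/-- The characteristic polynomial f(t,a,b) of the game operator is strictly
positive for all t > (16 + √13)/45 and a, b ∈ [−1, 1]. -/
theorem f_pos_above_tstar (t a b : ℝ)
    (ht : t > (16 + Real.sqrt 13) / 45)
    (ha : -1 ≤ a ∧ a ≤ 1) (hb : -1 ≤ b ∧ b ≤ 1) :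
    t^4 - t^3 + ((32 + (1+a)*(1+b)) / 100) * t^2
      - ((16 + 3*(1+a)*(1+b)) / 500) * t
      + ((1+a)*(1+b)*(4 - (1-a)*(1-b))) / 5000 > 0 := by
  obtain ⟨ha1, ha2⟩ := ha
  obtain ⟨hb1, hb2⟩ := hb
  have hs : Real.sqrt 13 > 3.6 := by
    have h : (3.6:ℝ) = Real.sqrt (3.6^2) := by
      rw [Real.sqrt_sq]; norm_num
    rw [h]
    apply Real.sqrt_lt_sqrt <;> norm_num
  have ht' : t > 19.6/45 := by linarith
  have hsq : (45*t - 16)^2 > 13 := by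
    have h1 : 45*t - 16 > Real.sqrt 13 := by linarith
    nlinarith [Real.sq_sqrt (by norm_num : (13:ℝ) ≥ 0), Real.sqrt_nonneg 13]
  have hQ : 225*t^2 - 160*t + 27 > 0 := by nlinarith
  rcases le_or_gt t (3/5) with hcase | hcase
  · -- t ≤ 3/5 : use the deviation polynomial around the minimizer a = b = 2 - 5t
    have hD := Dnn (3-5*t) (a+5*t-2) (b+5*t-2)
      (by linarith) (by linarith) (by linarith) (by linarith) (by linarith) (by linarith)
    nlinarith [hD, mul_pos (mul_pos (by linarith : (0:ℝ) < 5*t-1)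
      (by linarith : (0:ℝ) < 5*t-1)) hQ]
  · -- t > 3/5 : the coefficient of (1+a)(1+b) is already nonnegative
    have hbr : 0 ≤ 2*(5*t-2)*(5*t-1) - (1-a)*(1-b) := by
      nlinarith [mul_nonneg (by linarith : (0:ℝ) ≤ 1-a) (by linarith : (0:ℝ) ≤ 1-b),
        mul_nonneg (by linarith : (0:ℝ) ≤ 5*t-3) (by linarith : (0:ℝ) ≤ 5*t-1)]
    have h1 : 0 ≤ (1+a)*(1+b) * (2*(5*t-2)*(5*t-1) - (1-a)*(1-b)) :=
      mul_nonneg (mul_nonneg (by linarith) (by linarith)) hbr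
    nlinarith [h1, mul_pos (mul_pos (mul_pos (by linarith : (0:ℝ) < t)
      (by linarith : (0:ℝ) < 5*t-2)) (by linarith : (0:ℝ) < 5*t-2))
      (by linarith : (0:ℝ) < 5*t-1)]
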